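/- All derivatives of the function P(t) = 1 − ∑_{j=1}^∞ (−1)^{j−1}·2^j·e^{−(2^j−1)t}·∏_{l=1}^j 1/(2^l−1) vanish at t = 0: P^{(k)}(0) = 0 for all k ≥ 1, and P(0) = 0. Consequently P is not analytic at 0 (it is not identically zero on any right neighborhood of 0). -/

import Mathlib

/-- The limiting distribution function
`P(t) = 1 - ∑_{j=1}^∞ (-1)^{j-1} 2^j e^{-(2^j-1)t} ∏_{l=1}^j (2^l-1)⁻¹`
(indices shifted by one here). -/
noncomputable def limP (t : ℝ) : ℝ :=
  1 - ∑' j : ℕ, (-1 : ℝ) ^ j * 2 ^ (j + 1) * Real.exp (-((2 : ℝ) ^ (j + 1) - 1) * t) *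
    ∏ l ∈ Finset.range (j + 1), ((2 : ℝ) ^ (l + 1) - 1)⁻¹

/-!
Write `P(t) = ∑_{j ≥ 0} c_j e^{-μ_j t}` with `μ_j = 2^j - 1` and
`c_j = (-2)^j ∏_{l=1}^j (2^l - 1)⁻¹`, so `c_0 = 1`. The weights decay superexponentially, so
the series may be differentiated termwise on `[0, ∞)` and `P^{(k)}(0) = ∑ (-μ_j)^k c_j`. The
recursions `μ_{j+1} c_{j+1} = -2 c_j` and `μ_{j+1} = 2 μ_j + 1` give the delay equation
`P'(t) = 2 e^{-t} P(2t)` and, after expanding `(2μ_j + 1)^k` binomially, express each of these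
moments through the lower ones; the zeroth one vanishes because the partial sums of `∑ c_j`
telescope to `±∏_{l ≤ n} (2^l - 1)⁻¹`. Hence all derivatives vanish at `0`. If `P` vanished on
`(0, ε)`, the delay equation would make it vanish on `(0, 2ε)`, `(0, 4ε)`, …, contradicting
`P(t) → 1` as `t → ∞`.
-/

open Filter Topology Set Real

noncomputable def expSum (a ν : ℕ → ℝ) (t : ℝ) : ℝ := ∑' j, a j * exp (-ν j * t)

section ExpSum

variable {a ν : ℕ → ℝ} {t : ℝ}

lemma abs_mul_exp_neg_mul_le {c m t : ℝ} (hm : 0 ≤ m) (ht : 0 ≤ t) :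
    |c * exp (-m * t)| ≤ |c| := by
  rw [abs_mul, abs_exp]
  exact mul_le_of_le_one_right (abs_nonneg c) (exp_le_one_iff.mpr (by nlinarith))

lemma abs_neg_mul_of_nonneg {m : ℝ} (c : ℝ) (hm : 0 ≤ m) : |-m * c| = |c| * m := by
  rw [abs_mul, abs_neg, abs_of_nonneg hm, mul_comm]

lemma summable_expSum (hν : ∀ j, 0 ≤ ν j) (ha : Summable fun j => |a j|) (ht : 0 ≤ t) :
    Summable fun j => a j * exp (-ν j * t) :=
  .of_norm_bounded ha fun j => abs_mul_exp_neg_mul_le (hν j) ht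

lemma continuousOn_expSum (hν : ∀ j, 0 ≤ ν j) (ha : Summable fun j => |a j|) :
    ContinuousOn (expSum a ν) (Ici 0) :=
  continuousOn_tsum (fun j => by fun_prop) ha fun j _ ht => abs_mul_exp_neg_mul_le (hν j) ht

lemma hasDerivAt_expSum (hν : ∀ j, 0 ≤ ν j) (ha : Summable fun j => |a j|)
    (haν : Summable fun j => |a j| * ν j) (ht : 0 < t) :
    HasDerivAt (expSum a ν) (expSum (fun j => -ν j * a j) ν t) t := by
  refine hasDerivAt_tsum_of_isPreconnected (g := fun j s => a j * exp (-ν j * s))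
    (g' := fun j s => -ν j * a j * exp (-ν j * s)) haν isOpen_Ioi isPreconnected_Ioi
    (fun j s _ => ?_) (fun j s hs => ?_) (mem_Ioi.mpr ht) (summable_expSum hν ha ht.le)
    (mem_Ioi.mpr ht)
  · simpa [mul_comm, mul_assoc, mul_left_comm] using
      (((hasDerivAt_id s).const_mul (-ν j)).exp).const_mul (a j)
  · rw [← abs_neg_mul_of_nonneg _ (hν j)]
    exact abs_mul_exp_neg_mul_le (hν j) (le_of_lt hs)

-- The series may diverge for every `t < 0`, so at `t = 0` the one-sided derivative comes from the
-- continuity of the differentiated series on `[0, ∞)` instead of from termwise differentiation.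
lemma hasDerivWithinAt_expSum (hν : ∀ j, 0 ≤ ν j) (ha : Summable fun j => |a j|)
    (haν : Summable fun j => |a j| * ν j) (ht : 0 ≤ t) :
    HasDerivWithinAt (expSum a ν) (expSum (fun j => -ν j * a j) ν t) (Ici 0) t := by
  rcases ht.lt_or_eq with ht | rfl
  · exact (hasDerivAt_expSum hν ha haν ht).hasDerivWithinAt
  have hderiv : Summable fun j => |-ν j * a j| := by
    simpa only [abs_neg_mul_of_nonneg _ (hν _)] using haν
  refine hasDerivWithinAt_Ici_of_tendsto_deriv
    (fun s hs => (hasDerivAt_expSum hν ha haν hs).differentiableAt.differentiableWithinAt)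
    ((continuousOn_expSum hν ha 0 self_mem_Ici).mono Ioi_subset_Ici_self) self_mem_nhdsWithin ?_
  have hcont := ((continuousOn_expSum hν hderiv 0 self_mem_Ici).mono Ioi_subset_Ici_self).tendsto
  refine hcont.congr' ?_
  filter_upwards [self_mem_nhdsWithin] with s hs
  exact (hasDerivAt_expSum hν ha haν hs).deriv.symm

lemma iteratedDerivWithin_expSum (hν : ∀ j, 0 ≤ ν j)
    (ha : ∀ k, Summable fun j => |a j| * ν j ^ k) (k : ℕ) :
    EqOn (iteratedDerivWithin k (expSum a ν) (Ici 0))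
      (expSum (fun j => (-ν j) ^ k * a j) ν) (Ici 0) := by
  have hak (k : ℕ) : Summable fun j => |(-ν j) ^ k * a j| := by
    simpa only [abs_mul, abs_pow, abs_neg, abs_of_nonneg (hν _), mul_comm] using ha k
  induction k with
  | zero => simp [EqOn]
  | succ k ih =>
    intro t ht
    have hakν : Summable fun j => |(-ν j) ^ k * a j| * ν j := by
      simpa only [abs_mul, abs_pow, abs_neg, abs_of_nonneg (hν _), pow_succ, mul_comm,
        mul_assoc, mul_left_comm] using ha (k + 1)
    rw [iteratedDerivWithin_succ, derivWithin_congr ih (ih ht),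
      (hasDerivWithinAt_expSum hν (hak k) hakν ht).derivWithin (uniqueDiffOn_Ici 0 t ht)]
    simp only [pow_succ]
    ring_nf

end ExpSum

namespace LimP

noncomputable def rate (j : ℕ) : ℝ := 2 ^ j - 1

noncomputable def invProd (j : ℕ) : ℝ := ∏ l ∈ Finset.range j, (rate (l + 1))⁻¹

noncomputable def coeff (j : ℕ) : ℝ := (-2) ^ j * invProd j

lemma rate_zero : rate 0 = 0 := by simp [rate]

lemma rate_succ (j : ℕ) : rate (j + 1) = 2 * rate j + 1 := by
  simp only [rate, pow_succ]; ring

lemma rate_nonneg (j : ℕ) : 0 ≤ rate j := sub_nonneg.mpr (one_le_pow₀ one_le_two)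

lemma one_le_rate_succ (j : ℕ) : 1 ≤ rate (j + 1) := by
  rw [rate_succ]; linarith [rate_nonneg j]

lemma rate_succ_mul_invProd_succ (j : ℕ) : rate (j + 1) * invProd (j + 1) = invProd j := by
  rw [invProd, Finset.prod_range_succ, mul_left_comm,
    mul_inv_cancel₀ (by linarith [one_le_rate_succ j]), mul_one, invProd]

lemma invProd_pos (j : ℕ) : 0 < invProd j :=
  Finset.prod_pos fun l _ => inv_pos.mpr (by linarith [one_le_rate_succ l])

lemma abs_coeff (j : ℕ) : |coeff j| = 2 ^ j * invProd j := by
  rw [coeff, abs_mul, abs_pow, abs_neg, abs_two, abs_of_pos (invProd_pos j)]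

lemma rate_succ_mul_coeff_succ (j : ℕ) : rate (j + 1) * coeff (j + 1) = -2 * coeff j := by
  rw [coeff, coeff, ← rate_succ_mul_invProd_succ j, pow_succ]; ring

lemma tendsto_rate_atTop : Tendsto rate atTop atTop :=
  tendsto_atTop_add_const_right _ _ (tendsto_pow_atTop_atTop_of_one_lt one_lt_two)

lemma summable_abs_coeff_mul_rate_pow (k : ℕ) : Summable fun j => |coeff j| * rate j ^ k := by
  have hpos (n : ℕ) : 0 < |coeff (n + 1)| * rate (n + 1) ^ k := by
    rw [abs_coeff]
    have := invProd_pos (n + 1)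
    have := one_le_rate_succ n
    positivity
  have hratio (n : ℕ) : |coeff (n + 2)| * rate (n + 2) ^ k =
      2 / rate (n + 2) * (2 + (rate (n + 1))⁻¹) ^ k * (|coeff (n + 1)| * rate (n + 1) ^ k) := by
    have h1 := one_le_rate_succ n
    have h2 := one_le_rate_succ (n + 1)
    have hcoeff : |coeff (n + 2)| = 2 * |coeff (n + 1)| / rate (n + 2) := by
      rw [eq_div_iff (by linarith), mul_comm, ← abs_of_nonneg (rate_nonneg _), ← abs_mul,
        rate_succ_mul_coeff_succ, abs_mul]
      norm_num
    have hrate : (2 + (rate (n + 1))⁻¹) * rate (n + 1) = rate (n + 2) := by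
      rw [rate_succ (n + 1)]; field_simp
    rw [hcoeff, ← hrate, mul_pow, hrate]
    ring
  have hlim : Tendsto (fun n => 2 / rate (n + 2) * (2 + (rate (n + 1))⁻¹) ^ k) atTop (𝓝 0) := by
    have h1 := (tendsto_const_nhds (x := (2 : ℝ))).div_atTop
      (tendsto_rate_atTop.comp (tendsto_add_atTop_nat 2))
    have h2 := ((tendsto_inv_atTop_zero.comp
      (tendsto_rate_atTop.comp (tendsto_add_atTop_nat 1))).const_add 2).pow k
    simpa using h1.mul h2
  rw [← summable_nat_add_iff 1]
  refine summable_of_ratio_test_tendsto_lt_one zero_lt_one (.of_forall fun n => (hpos n).ne') ?_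
  refine hlim.congr fun n => ?_
  rw [Real.norm_of_nonneg (hpos _).le, Real.norm_of_nonneg (hpos _).le, hratio,
    mul_div_cancel_right₀ _ (hpos n).ne']

lemma summable_rate_pow_mul_coeff (k : ℕ) : Summable fun j => (-rate j) ^ k * coeff j :=
  .of_abs <| by
    simpa only [abs_mul, abs_pow, abs_neg, abs_of_nonneg (rate_nonneg _), mul_comm] using
      summable_abs_coeff_mul_rate_pow k

lemma sum_range_succ_coeff (n : ℕ) :
    ∑ j ∈ Finset.range (n + 1), coeff j = (-1) ^ n * invProd n := by
  induction n with
  | zero => simp [coeff, invProd]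
  | succ n ih =>
    rw [Finset.sum_range_succ, ih, ← rate_succ_mul_invProd_succ n, coeff, rate, neg_pow 2]
    ring

lemma tsum_coeff : ∑' j, coeff j = 0 := by
  have hsum : Summable coeff := by simpa using summable_rate_pow_mul_coeff 0
  refine (hsum.hasSum_iff_tendsto_nat.mpr ?_).tsum_eq
  rw [← tendsto_add_atTop_iff_nat 1]
  simp only [sum_range_succ_coeff]
  refine squeeze_zero_norm (fun n => ?_) (hsum.abs.tendsto_atTop_zero)
  rw [Real.norm_eq_abs, abs_mul, abs_pow, abs_neg, abs_one, one_pow, one_mul, abs_coeff,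
    abs_of_pos (invProd_pos n)]
  exact le_mul_of_one_le_left (invProd_pos n).le (one_le_pow₀ one_le_two)

lemma tsum_rate_mul_coeff_mul (g : ℝ → ℝ) :
    ∑' j, rate j * coeff j * g (rate j) = -2 * ∑' j, coeff j * g (2 * rate j + 1) := by
  rw [← (add_left_injective 1).tsum_eq (f := fun j => rate j * coeff j * g (rate j))]
  · simp only [rate_succ_mul_coeff_succ]
    simp only [rate_succ, ← tsum_mul_left]
    exact tsum_congr fun j => by ring
  · rintro (_ | j) hj
    · simp [rate_zero] at hj
    · exact ⟨j, rfl⟩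

noncomputable def moment (k : ℕ) : ℝ := ∑' j, (-rate j) ^ k * coeff j

lemma moment_succ (k : ℕ) : moment (k + 1) =
    2 * ∑ i ∈ Finset.range (k + 1), (-1) ^ (k - i) * 2 ^ i * k.choose i * moment i := by
  have hbinom (j : ℕ) : -(coeff j * -(-(2 * rate j + 1)) ^ k) =
      ∑ i ∈ Finset.range (k + 1),
        (-1) ^ (k - i) * 2 ^ i * k.choose i * ((-rate j) ^ i * coeff j) := by
    rw [neg_mul_eq_mul_neg, neg_neg, show -(2 * rate j + 1) = 2 * -rate j + -1 by ring, add_pow,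
      Finset.mul_sum]
    exact Finset.sum_congr rfl fun i _ => by rw [mul_pow]; ring
  calc moment (k + 1) = ∑' j, rate j * coeff j * -(-rate j) ^ k :=
        tsum_congr fun j => by ring
    _ = -2 * ∑' j, coeff j * -(-(2 * rate j + 1)) ^ k :=
        tsum_rate_mul_coeff_mul fun x => -(-x) ^ k
    _ = 2 * ∑' j, ∑ i ∈ Finset.range (k + 1),
          (-1) ^ (k - i) * 2 ^ i * k.choose i * ((-rate j) ^ i * coeff j) := by
        rw [← tsum_congr hbinom, tsum_neg]; ring
    _ = _ := by
        rw [Summable.tsum_finsetSum fun i _ => (summable_rate_pow_mul_coeff i).mul_left _]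
        simp only [tsum_mul_left, moment]

lemma moment_eq_zero (k : ℕ) : moment k = 0 := by
  induction k using Nat.strong_induction_on with
  | _ k ih =>
    rcases k with _ | k
    · simpa [moment] using tsum_coeff
    · rw [moment_succ, Finset.sum_eq_zero fun i hi => ?_, mul_zero]
      rw [ih i (Finset.mem_range.mp hi), mul_zero]

lemma summable_abs_coeff : Summable fun j => |coeff j| := by
  simpa using summable_abs_coeff_mul_rate_pow 0

lemma limP_eq (t : ℝ) : limP t = 1 + ∑' j, coeff (j + 1) * exp (-rate (j + 1) * t) := by
  rw [limP, sub_eq_add_neg, ← tsum_neg]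
  congr 1
  refine tsum_congr fun j => ?_
  simp only [coeff, invProd, rate, neg_pow (2 : ℝ), pow_succ]
  ring

-- Not an equality of functions: for `t < 0` both series diverge, `tsum` returns `0`, and the
-- constant term of `limP` sits outside its `tsum`.
lemma eqOn_limP_expSum : EqOn limP (expSum coeff rate) (Ici 0) := by
  intro t ht
  rw [limP_eq, expSum, (summable_expSum rate_nonneg summable_abs_coeff ht).tsum_eq_zero_add]
  simp [coeff, invProd, rate_zero]

lemma expSum_neg_rate_mul_coeff (t : ℝ) :
    expSum (fun j => -rate j * coeff j) rate t = 2 * exp (-t) * expSum coeff rate (2 * t) := by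
  calc expSum (fun j => -rate j * coeff j) rate t
        = ∑' j, rate j * coeff j * -exp (-rate j * t) := tsum_congr fun j => by ring
    _ = -2 * ∑' j, coeff j * -exp (-(2 * rate j + 1) * t) :=
        tsum_rate_mul_coeff_mul fun x => -exp (-x * t)
    _ = _ := by
        rw [expSum, ← tsum_mul_left, ← tsum_mul_left]
        refine tsum_congr fun j => ?_
        rw [show -(2 * rate j + 1) * t = -t + -rate j * (2 * t) by ring, exp_add]
        ring

lemma hasDerivWithinAt_limP {t : ℝ} (ht : 0 ≤ t) :
    HasDerivWithinAt limP (2 * exp (-t) * limP (2 * t)) (Ici 0) t := by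
  have h := hasDerivWithinAt_expSum rate_nonneg summable_abs_coeff
    (by simpa using summable_abs_coeff_mul_rate_pow 1) ht
  rw [expSum_neg_rate_mul_coeff, ← eqOn_limP_expSum (by positivity : (0 : ℝ) ≤ 2 * t)] at h
  exact h.congr eqOn_limP_expSum (eqOn_limP_expSum ht)

lemma iteratedDerivWithin_limP_zero (k : ℕ) : iteratedDerivWithin k limP (Ici 0) 0 = 0 := by
  rw [iteratedDerivWithin_congr eqOn_limP_expSum self_mem_Ici,
    iteratedDerivWithin_expSum rate_nonneg summable_abs_coeff_mul_rate_pow k self_mem_Ici]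
  simpa [expSum, moment] using moment_eq_zero k

lemma tendsto_limP_atTop : Tendsto limP atTop (𝓝 1) := by
  have hbound (t : ℝ) (ht : 0 ≤ t) :
      ‖limP t - 1‖ ≤ (∑' j, |coeff (j + 1)|) * exp (-t) := by
    rw [limP_eq, add_sub_cancel_left]
    refine tsum_of_norm_bounded
      (((summable_nat_add_iff 1).mpr summable_abs_coeff).hasSum.mul_right (exp (-t))) fun j => ?_
    rw [Real.norm_eq_abs, abs_mul, abs_exp]
    gcongr
    nlinarith [one_le_rate_succ j]
  rw [← tendsto_sub_nhds_zero_iff]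
  exact squeeze_zero_norm' ((eventually_ge_atTop 0).mono hbound)
    (by simpa using tendsto_exp_neg_atTop_nhds_zero.const_mul (∑' j, |coeff (j + 1)|))

lemma eqOn_zero_Ioo_two_mul {a : ℝ} (h : EqOn limP (0 : ℝ → ℝ) (Ioo 0 a)) :
    EqOn limP (0 : ℝ → ℝ) (Ioo 0 (2 * a)) := by
  rintro t ⟨ht0, hta⟩
  have hs : t / 2 ∈ Ioo 0 a := ⟨by positivity, by linarith⟩
  have hderiv := (hasDerivWithinAt_limP hs.1.le).hasDerivAt (Ici_mem_nhds hs.1)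
  have hzero : HasDerivAt limP 0 (t / 2) :=
    (hasDerivAt_const _ 0).congr_of_eventuallyEq (h.eventuallyEq_of_mem (Ioo_mem_nhds hs.1 hs.2))
  have := hderiv.unique hzero
  rw [mul_div_cancel₀ t two_ne_zero] at this
  simpa [(exp_pos _).ne'] using this

lemma eqOn_zero_Ioi_of_Ioo {ε : ℝ} (hε : 0 < ε) (h : EqOn limP (0 : ℝ → ℝ) (Ioo 0 ε)) :
    EqOn limP (0 : ℝ → ℝ) (Ioi 0) := by
  have hn (n : ℕ) : EqOn limP (0 : ℝ → ℝ) (Ioo 0 (2 ^ n * ε)) := by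
    induction n with
    | zero => simpa using h
    | succ n ih =>
      simpa [pow_succ, mul_comm, mul_left_comm, mul_assoc] using eqOn_zero_Ioo_two_mul ih
  intro t ht
  obtain ⟨n, hn'⟩ := pow_unbounded_of_one_lt (t / ε) one_lt_two
  exact hn n ⟨ht, by rwa [div_lt_iff₀ hε] at hn'⟩

end LimP

/-- `P(0) = 0`, all derivatives of `P` (taken on `[0,∞)`) vanish at `0`, yet `P` is not
identically zero on any right neighborhood of `0`; hence `P` is not analytic at `0`. -/
theorem limP_flat_at_zero :
    limP 0 = 0 ∧
    (∀ k : ℕ, 1 ≤ k → iteratedDerivWithin k limP (Set.Ici 0) 0 = 0) ∧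
    (∀ ε : ℝ, 0 < ε → ∃ t : ℝ, 0 < t ∧ t < ε ∧ limP t ≠ 0) := by
  refine ⟨by simpa using LimP.iteratedDerivWithin_limP_zero 0,
    fun k _ => LimP.iteratedDerivWithin_limP_zero k, fun ε hε => ?_⟩
  by_contra! hzero
  obtain ⟨t, hpos, ht⟩ :=
    ((LimP.tendsto_limP_atTop.eventually_const_lt one_pos).and (eventually_gt_atTop 0)).exists
  exact hpos.ne' (LimP.eqOn_zero_Ioi_of_Ioo hε (fun s hs => hzero s hs.1 hs.2) ht)
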